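/- arXiv:1410.2194 — 2 statements merged into one kernel-verified Lean document; each statement's English description precedes it below -/
import Mathlib

section
/- Let S be a finite semigroup, M⁰(G,n,m;P) a CS-diagonal finite regular Rees matrix semigroup, and ι : M⁰(G,n,m;P) → S an injective semigroup homomorphism whose image is an ideal of S. Let s ∈ S and suppose s·ι(g;α,β) = ι(g';α',β) and s·ι(h;γ,λ) = ι(h';γ',λ) for some g, g', h, h' ∈ G, rows α, α', γ, γ' and columns β, λ. If α ~ γ, then α' ~ γ'. (This is the well-definedness of the minimal non-nilpotent representation Γ on ~-classes.) -/
/-! Common definitions: Mal'cev nilpotency, the relations η_n, η, the congruence η*,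
Rees matrix semigroups (with and without zero), regularity, CS-diagonality,
the row relation ~, ideals, principal series and Rees factor isomorphisms. -/

/-- The pair `(λ_n, ρ_n)` of Mal'cev words in a monoid, with `λ₀ = x`, `ρ₀ = y`,
`λ_{k+1} = λ_k * z (k+1) * ρ_k` and `ρ_{k+1} = ρ_k * z (k+1) * λ_k`. -/
def malcev {M : Type*} [Monoid M] (x y : M) (z : ℕ → M) : ℕ → M × M
  | 0 => (x, y)
  | k + 1 =>
      ((malcev x y z k).1 * z (k + 1) * (malcev x y z k).2,
       (malcev x y z k).2 * z (k + 1) * (malcev x y z k).1)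

/-- A semigroup `S` is Mal'cev nilpotent if for some positive `n`,
`λ_n(a,b,c₁,…,c_n) = ρ_n(a,b,c₁,…,c_n)` for all `a b ∈ S` and all `cᵢ ∈ S¹`,
where `S¹ = WithOne S`. -/
def MalcevNilpotent (S : Type*) [Semigroup S] : Prop :=
  ∃ n : ℕ, 0 < n ∧ ∀ (a b : S) (z : ℕ → WithOne S),
    (malcev (a : WithOne S) (b : WithOne S) z n).1 =
    (malcev (a : WithOne S) (b : WithOne S) z n).2

/-- The relation `η_n` on a semigroup `S`: `η₁` is the diagonal, and for `n > 1`,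
`x η_n y` iff there are `z₁, …, z_n ∈ S¹` with `x = λ_n(x,y,z₁,…,z_n)` and
`y = ρ_n(x,y,z₁,…,z_n)`. -/
def etaN (S : Type*) [Semigroup S] (n : ℕ) (x y : S) : Prop :=
  (n = 1 ∧ x = y) ∨
  (1 < n ∧ ∃ z : ℕ → WithOne S,
    (x : WithOne S) = (malcev (x : WithOne S) (y : WithOne S) z n).1 ∧
    (y : WithOne S) = (malcev (x : WithOne S) (y : WithOne S) z n).2)

/-- `η`, the transitive closure of the union of the relations `η_n`, `n ≥ 1`. -/
def eta (S : Type*) [Semigroup S] : S → S → Prop :=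
  Relation.TransGen (fun x y => ∃ n, 1 ≤ n ∧ etaN S n x y)

/-- `η*`, the smallest congruence on `S` containing `η`. -/
def etaStar (S : Type*) [Semigroup S] : Con S :=
  conGen (eta S)

/-- A semigroup is an inverse semigroup if every element has exactly one inverse. -/
def IsInverseSemigroup (S : Type*) [Semigroup S] : Prop :=
  ∀ x : S, ∃! y : S, x * y * x = x ∧ y * x * y = y

/-- A semigroup is completely regular if every element lies in a subgroup:
for every `a` there is `b` with `aba = a`, `ab = ba` and `bab = b`. -/
def IsCompletelyRegular (S : Type*) [Semigroup S] : Prop :=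
  ∀ a : S, ∃ b : S, a * b * a = a ∧ a * b = b * a ∧ b * a * b = b

/-- A (possibly empty) two-sided ideal of a semigroup. -/
def IsIdeal (S : Type*) [Semigroup S] (I : Set S) : Prop :=
  ∀ s : S, ∀ x ∈ I, s * x ∈ I ∧ x * s ∈ I

/-- The Rees matrix semigroup `M⁰(G, n, m; P)` with zero `theta`; the sandwich
matrix entry `P j i : Option G` is `none` when the entry is `θ`. -/
inductive ReesMatrix (G : Type*) (n m : ℕ) (P : Fin m → Fin n → Option G) where
  | theta : ReesMatrix G n m P
  | elem (g : G) (i : Fin n) (j : Fin m) : ReesMatrix G n m P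

namespace ReesMatrix

variable {G : Type*} [Group G] {n m : ℕ} {P : Fin m → Fin n → Option G}

/-- Multiplication: `(g;i,j)(h;k,l) = (g p_{j,k} h; i, l)` if `p_{j,k} ≠ θ`,
and all other products are `θ`. -/
def mul : ReesMatrix G n m P → ReesMatrix G n m P → ReesMatrix G n m P
  | elem g i j, elem h k l =>
      match P j k with
      | some p => elem (g * p * h) i l
      | none => theta
  | _, _ => theta

instance : Semigroup (ReesMatrix G n m P) where
  mul := mul
  mul_assoc a b c := by
    show mul (mul a b) c = mul a (mul b c)
    rcases a with _ | ⟨g, i, j⟩ <;> rcases b with _ | ⟨h, k, l⟩ <;>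
      rcases c with _ | ⟨f, r, s⟩
    all_goals try rfl
    · rcases hjk : P j k with _ | p <;> simp [mul, hjk]
    · rcases hjk : P j k with _ | p <;> rcases hlr : P l r with _ | q <;>
        simp [mul, hjk, hlr, mul_assoc]

theorem mul_def (a b : ReesMatrix G n m P) : a * b = mul a b := rfl

instance [Finite G] : Finite (ReesMatrix G n m P) := by
  have := Fintype.ofFinite G
  exact Finite.of_surjective
    (fun x : Option (G × Fin n × Fin m) =>
      match x with
      | none => (theta : ReesMatrix G n m P)
      | some (g, i, j) => elem g i j)
    (by rintro (_ | ⟨g, i, j⟩)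
        · exact ⟨none, rfl⟩
        · exact ⟨some (g, i, j), rfl⟩)

end ReesMatrix

/-- `P` is regular: every row and every column of the sandwich matrix has a
nonzero entry. -/
def IsRegularSandwich {G : Type*} {n m : ℕ} (P : Fin m → Fin n → Option G) : Prop :=
  (∀ i : Fin n, ∃ j : Fin m, P j i ≠ none) ∧ (∀ j : Fin m, ∃ i : Fin n, P j i ≠ none)

/-- `P` is CS-diagonal: whenever `p_{r,t}`, `p_{r',t}` and `p_{r,t'}` are all
nonzero, so is `p_{r',t'}`. -/
def IsCSDiagonal {G : Type*} {n m : ℕ} (P : Fin m → Fin n → Option G) : Prop :=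
  ∀ (r r' : Fin m) (t t' : Fin n),
    P r t ≠ none → P r' t ≠ none → P r t' ≠ none → P r' t' ≠ none

/-- The relation `~` on rows: `i ~ i'` iff some column `j` has `p_{j,i} ≠ θ`
and `p_{j,i'} ≠ θ`. -/
def rowRel {G : Type*} {n m : ℕ} (P : Fin m → Fin n → Option G) (i i' : Fin n) : Prop :=
  ∃ j : Fin m, P j i ≠ none ∧ P j i' ≠ none

/-- The completely simple Rees matrix semigroup `M(G, n, m; P)` (without zero),
all sandwich entries lying in `G`. -/
inductive ReesMatrixCS (G : Type*) (n m : ℕ) (P : Fin m → Fin n → G) where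
  | elem (g : G) (i : Fin n) (j : Fin m) : ReesMatrixCS G n m P

namespace ReesMatrixCS

variable {G : Type*} [Group G] {n m : ℕ} {P : Fin m → Fin n → G}

instance : Semigroup (ReesMatrixCS G n m P) where
  mul a b := match a, b with
    | elem g i j, elem h k l => elem (g * P j k * h) i l
  mul_assoc a b c := by
    rcases a with ⟨g, i, j⟩; rcases b with ⟨h, k, l⟩; rcases c with ⟨f, r, s⟩
    show elem _ _ _ = elem _ _ _
    simp [mul_assoc]

instance [Finite G] : Finite (ReesMatrixCS G n m P) := by
  have := Fintype.ofFinite G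
  exact Finite.of_surjective
    (fun x : G × Fin n × Fin m => elem x.1 x.2.1 x.2.2)
    (by rintro ⟨g, i, j⟩; exact ⟨(g, i, j), rfl⟩)

end ReesMatrixCS

/-- A principal series of a finite semigroup `S`:
`S = C 1 ⊃ C 2 ⊃ … ⊃ C o ⊃ C (o+1) = ∅`, each `C p` an ideal of `S` with
no ideal of `S` strictly between consecutive terms. -/
structure PrincipalSeries (S : Type*) [Semigroup S] where
  o : ℕ
  ho : 1 ≤ o
  C : ℕ → Set S
  first : C 1 = Set.univ
  last : C (o + 1) = ∅
  isIdeal : ∀ p, 1 ≤ p → p ≤ o → IsIdeal S (C p)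
  strict : ∀ p, 1 ≤ p → p ≤ o → C (p + 1) ⊂ C p
  max : ∀ p, 1 ≤ p → p ≤ o → ∀ I : Set S, IsIdeal S I →
    C (p + 1) ⊆ I → I ⊆ C p → I = C (p + 1) ∨ I = C p

/-- `f` realises the Rees factor `A/B` (the Rees quotient of `A` by the ideal `B`;
if `B = ∅` the factor is `A` itself) as the Rees matrix semigroup with zero
`M⁰(H, n', m'; Q)`. -/
def IsReesFactorM0 {S : Type*} [Semigroup S] (A B : Set S)
    {H : Type*} [Group H] {n' m' : ℕ} (Q : Fin m' → Fin n' → Option H)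
    (f : S → ReesMatrix H n' m' Q) : Prop :=
  (∀ x ∈ A, ∀ y ∈ A, f (x * y) = f x * f y) ∧
  ((B = ∅ ∧ Set.BijOn f A Set.univ) ∨
   (B ≠ ∅ ∧ (∀ x ∈ B, f x = ReesMatrix.theta) ∧
     (∀ x ∈ A \ B, f x ≠ ReesMatrix.theta) ∧
     Set.InjOn f (A \ B) ∧
     (∀ w : ReesMatrix H n' m' Q, w ≠ ReesMatrix.theta → ∃ x ∈ A \ B, f x = w)))

/-- `f` realises `A` as the completely simple Rees matrix semigroup
`M(H, n', m'; Q)` (without zero). -/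
def IsReesFactorCS {S : Type*} [Semigroup S] (A : Set S)
    {H : Type*} [Group H] {n' m' : ℕ} (Q : Fin m' → Fin n' → H)
    (f : S → ReesMatrixCS H n' m' Q) : Prop :=
  (∀ x ∈ A, ∀ y ∈ A, f (x * y) = f x * f y) ∧ Set.BijOn f A Set.univ

/-! Left multiplication by `s` acts on the ideal `ι(M⁰)` through the element `w ∈ M⁰` with
`ι w = ι x * s`, for a fixed `x = (1; α', j₁)` with `p_{j₁,α'} ≠ θ`. Since `x * ι⁻¹(s * e) = w * e`,
a product `w * (g; α, β)` is nonzero, so `w` has a column `v` with `p_{v,α} ≠ θ`; CS-diagonality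
then gives `p_{v,γ} ≠ θ`, and transporting back shows `p_{j₁,γ'} ≠ θ`. -/

theorem exists_mul_eq_mul_of_isIdeal_range {T S : Type*} [Semigroup T] [Semigroup S]
    (ι : T →ₙ* S) (hinj : Function.Injective ι) (hideal : IsIdeal S (Set.range ι))
    (s : S) (x : T) : ∃ w : T, ∀ e e' : T, s * ι e = ι e' → w * e = x * e' := by
  obtain ⟨w, hw⟩ := (hideal s (ι x) ⟨x, rfl⟩).2
  refine ⟨w, fun e e' hs => hinj ?_⟩
  rw [map_mul, map_mul, hw, mul_assoc, hs]

namespace ReesMatrix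

variable {G : Type*} [Group G] {n m : ℕ} {P : Fin m → Fin n → Option G}

theorem elem_mul_elem_ne_theta_iff {g h : G} {i k : Fin n} {j l : Fin m} :
    elem g i j * elem h k l ≠ (theta : ReesMatrix G n m P) ↔ P j k ≠ none := by
  rw [mul_def]
  rcases hjk : P j k with _ | p <;> simp [mul, hjk]

end ReesMatrix

theorem minimal_representation_well_defined_general (S : Type*) [Semigroup S]
    (G : Type*) [Group G] (n m : ℕ) (P : Fin m → Fin n → Option G)
    (hreg : IsRegularSandwich P) (hdiag : IsCSDiagonal P)
    (ι : ReesMatrix G n m P →ₙ* S) (hinj : Function.Injective ι)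
    (hideal : IsIdeal S (Set.range ι))
    (s : S) (g g' h h' : G) (α α' γ γ' : Fin n) (β lam : Fin m)
    (h1 : s * ι (ReesMatrix.elem g α β) = ι (ReesMatrix.elem g' α' β))
    (h2 : s * ι (ReesMatrix.elem h γ lam) = ι (ReesMatrix.elem h' γ' lam))
    (hαγ : rowRel P α γ) : rowRel P α' γ' := by
  obtain ⟨j, hjα, hjγ⟩ := hαγ
  obtain ⟨j₁, hj₁⟩ := hreg.1 α'
  obtain ⟨w, hw⟩ :=
    exists_mul_eq_mul_of_isIdeal_range ι hinj hideal s (ReesMatrix.elem (1 : G) α' j₁)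
  have e1 := hw _ _ h1
  have e2 := hw _ _ h2
  have hx1 : ReesMatrix.elem 1 α' j₁ * ReesMatrix.elem g' α' β ≠
      (ReesMatrix.theta : ReesMatrix G n m P) :=
    ReesMatrix.elem_mul_elem_ne_theta_iff.2 hj₁
  refine ⟨j₁, hj₁, ?_⟩
  rcases w with _ | ⟨w₀, u, v⟩
  · exact (hx1 e1.symm).elim
  have hvα : P v α ≠ none := ReesMatrix.elem_mul_elem_ne_theta_iff.1 (e1 ▸ hx1)
  have hvγ : P v γ ≠ none := hdiag j v α γ hjα hvα hjγ
  exact ReesMatrix.elem_mul_elem_ne_theta_iff.1 (e2 ▸ ReesMatrix.elem_mul_elem_ne_theta_iff.2 hvγ)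

/-- well-definedness of the minimal non-nilpotent representation:
left multiplication by `s ∈ S` maps `~`-related rows of a CS-diagonal regular
Rees matrix ideal to `~`-related rows. -/
theorem minimal_representation_well_defined (S : Type*) [Semigroup S] [Finite S]
    (G : Type*) [Group G] [Finite G] (n m : ℕ) (P : Fin m → Fin n → Option G)
    (hreg : IsRegularSandwich P) (hdiag : IsCSDiagonal P)
    (ι : ReesMatrix G n m P →ₙ* S) (hinj : Function.Injective ι)
    (hideal : IsIdeal S (Set.range ι))
    (s : S) (g g' h h' : G) (α α' γ γ' : Fin n) (β lam : Fin m)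
    (h1 : s * ι (ReesMatrix.elem g α β) = ι (ReesMatrix.elem g' α' β))
    (h2 : s * ι (ReesMatrix.elem h γ lam) = ι (ReesMatrix.elem h' γ' lam))
    (hαγ : rowRel P α γ) : rowRel P α' γ' :=
  minimal_representation_well_defined_general S G n m P hreg hdiag ι hinj hideal s g g' h h' α α' γ
    γ' β lam h1 h2 hαγ
end

section
/- Let S be a finite semigroup, M⁰(G,n,m;P) a CS-diagonal finite regular Rees matrix semigroup, ι : M⁰(G,n,m;P) → S an injective semigroup homomorphism whose image M is an ideal of S, and T a subsemigroup of S with S = M ∪ T. Suppose there exist v₁, v₂ ∈ T, ~-equivalence classes K₁, K₂, K₃, K₄ of rows with K₁ ≠ K₃, elements g₁, g₁', g₂, g₂', g₃, g₃', g₄, g₄' ∈ G, rows α₁ ∈ K₁, α₁' ∈ K₂, α₂ ∈ K₃, α₂' ∈ K₄, α₃ ∈ K₁, α₃' ∈ K₄, α₄ ∈ K₃, α₄' ∈ K₂ and columns β₁, β₂, β₃, β₄ such that v₁·ι(g₁;α₁,β₁) = ι(g₁';α₁',β₁), v₁·ι(g₂;α₂,β₂) = ι(g₂';α₂',β₂),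 v₂·ι(g₃;α₃,β₃) = ι(g₃';α₃',β₃), and v₂·ι(g₄;α₄,β₄) = ι(g₄';α₄',β₄). Then every element of M is η*-related in S to ι(θ). -/
/-! Choose columns `μ`, `ν` with `p_{μ,k₂} ≠ θ` and `p_{ν,k₄} ≠ θ`, and run the Mal'cev
sequence from `x = (1; k₁, μ)`, `y = (1; k₃, ν)` with `z` alternating `v₂, v₁`. Since `v₂`
moves the row class `K₃` to `K₂` (seen by `μ`) and `K₁` to `K₄` (seen by `ν`), the terms
`λ₁ = x v₂ y` and `ρ₁ = y v₂ x` have the shapes `(·; k₁, ν)` and `(·; k₃, μ)`; then `v₁` moves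
`K₃` to `K₄` and `K₁` to `K₂`, so `λ₂`, `ρ₂` have the shapes `(·; k₁, μ)`, `(·; k₃, ν)` again
and never become `θ`. By finiteness the even terms repeat, which gives an `η`-pair
`(a; k₁, μ) η (b; k₃, ν)`. As `K₁ ≠ K₃`, multiplying this pair on both sides by suitable
elements of `M` yields any given element of `M` on one side and `θ` on the other. -/

open ReesMatrix

namespace ReesMatrix

variable {G : Type*} [Group G] {n m : ℕ} {P : Fin m → Fin n → Option G}

theorem elem_mul_elem {g h p : G} {i k : Fin n} {j l : Fin m} (hp : P j k = some p) :
    (elem g i j : ReesMatrix G n m P) * elem h k l = elem (g * p * h) i l := by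
  simp [mul_def, mul, hp]

theorem elem_mul_elem_eq_theta {g h : G} {i k : Fin n} {j l : Fin m} (hp : P j k = none) :
    (elem g i j : ReesMatrix G n m P) * elem h k l = theta := by
  simp [mul_def, mul, hp]

theorem theta_mul (x : ReesMatrix G n m P) : theta * x = theta := by
  cases x <;> rfl

theorem exists_of_mul_eq_elem {x y : ReesMatrix G n m P} {g : G} {i : Fin n} {l : Fin m}
    (h : x * y = elem g i l) :
    ∃ (a b : G) (j : Fin m) (k : Fin n),
      x = elem a i j ∧ y = elem b k l ∧ P j k ≠ none := by
  rcases x with _ | ⟨a, i', j⟩ <;> rcases y with _ | ⟨b, k, l'⟩ <;> try cases h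
  rcases hp : P j k with _ | p
  · rw [elem_mul_elem_eq_theta hp] at h; cases h
  · rw [elem_mul_elem hp] at h
    cases h
    exact ⟨a, b, j, k, rfl, rfl, by simp [hp]⟩

end ReesMatrix

section RowRelation

variable {G : Type*} {n m : ℕ} {P : Fin m → Fin n → Option G}

theorem rowRel_symm {i i' : Fin n} (h : rowRel P i i') : rowRel P i' i :=
  let ⟨j, hi, hi'⟩ := h; ⟨j, hi', hi⟩

theorem IsRegularSandwich.rowRel_refl (hreg : IsRegularSandwich P) (i : Fin n) :
    rowRel P i i :=
  let ⟨j, hj⟩ := hreg.1 i; ⟨j, hj, hj⟩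

theorem IsCSDiagonal.ne_none_of_rowRel (hdiag : IsCSDiagonal P) {j : Fin m} {i i' : Fin n}
    (hj : P j i ≠ none) (h : rowRel P i i') : P j i' ≠ none :=
  let ⟨j', hi, hi'⟩ := h; hdiag j' j i i' hi hj hi'

theorem IsCSDiagonal.rowRel_trans (hdiag : IsCSDiagonal P) {a b c : Fin n}
    (hab : rowRel P a b) (hbc : rowRel P b c) : rowRel P a c :=
  let ⟨j, ha, hb⟩ := hab; ⟨j, ha, hdiag.ne_none_of_rowRel hb hbc⟩

end RowRelation

section Malcev

theorem malcev_add {M : Type*} [Monoid M] (x y : M) (z : ℕ → M) (t k : ℕ) :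
    malcev x y z (t + k) =
      malcev (malcev x y z t).1 (malcev x y z t).2 (fun j => z (t + j)) k := by
  induction k with
  | zero => rfl
  | succ k ih => rw [← Nat.add_assoc, malcev, malcev, ih, Nat.add_assoc]

variable {S : Type*} [Semigroup S]

theorem exists_malcev_eq_coe (x y : S) (z : ℕ → WithOne S) (k : ℕ) :
    ∃ a b : S, malcev (x : WithOne S) y z k = ((a : WithOne S), (b : WithOne S)) := by
  induction k with
  | zero => exact ⟨x, y, rfl⟩
  | succ k ih =>
    obtain ⟨a, b, hab⟩ := ih
    rw [malcev, hab]
    cases z (k + 1) with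
    | one => exact ⟨a * b, b * a, by simp⟩
    | coe w => exact ⟨a * w * b, b * w * a, by simp⟩

theorem eta_of_malcev_eq {x y : S} {z : ℕ → WithOne S} {k : ℕ} (hk : 1 < k)
    (h : malcev (x : WithOne S) y z k = ((x : WithOne S), (y : WithOne S))) : eta S x y :=
  .single ⟨k, hk.le, .inr ⟨hk, z, by rw [h], by rw [h]⟩⟩

/-- Pigeonhole on the terms of index `d * k`: a repetition after `d * (q - p) ≥ 2` steps is an
`η`-pair. -/
theorem exists_malcev_eq_coe_eta [Finite S] (x y : S) (z : ℕ → WithOne S) {d : ℕ}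
    (hd : 2 ≤ d) :
    ∃ k, ∃ a b : S,
      malcev (x : WithOne S) y z (d * k) = ((a : WithOne S), (b : WithOne S)) ∧ eta S a b := by
  obtain ⟨p, q, hpq, hrep⟩ :=
    Set.Finite.exists_lt_map_eq_of_forall_mem
      (t := Set.range fun ab : S × S => ((ab.1 : WithOne S), (ab.2 : WithOne S)))
      (f := fun k => malcev (x : WithOne S) y z (d * k))
      (fun k => let ⟨a, b, h⟩ := exists_malcev_eq_coe x y z (d * k); ⟨(a, b), h.symm⟩)
      (Set.finite_range _)
  obtain ⟨a, b, hab⟩ := exists_malcev_eq_coe x y z (d * p)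
  refine ⟨p, a, b, hab, eta_of_malcev_eq (k := d * (q - p)) (z := fun j => z (d * p + j))
    (by nlinarith [Nat.sub_pos_of_lt hpq]) ?_⟩
  have hsplit : d * q = d * p + d * (q - p) := by rw [← Nat.mul_add, Nat.add_sub_cancel' hpq.le]
  calc malcev (a : WithOne S) b (fun j => z (d * p + j)) (d * (q - p))
      = malcev (x : WithOne S) y z (d * q) := by rw [hsplit, malcev_add, hab]
    _ = ((a : WithOne S), (b : WithOne S)) := hrep.symm.trans hab

end Malcev

section ReesIdeal

variable {S : Type*} [Semigroup S] {G : Type*} [Group G] {n m : ℕ}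
  {P : Fin m → Fin n → Option G}

def MapsRowClass (ι : ReesMatrix G n m P →ₙ* S) (v : S) (a a' : Fin n) : Prop :=
  ∀ α, rowRel P α a → ∀ (h : G) (β : Fin m),
    ∃ (h' : G) (α' : Fin n), rowRel P α' a' ∧ v * ι (elem h α β) = ι (elem h' α' β)

/-- Take `j` with `p_{j,a₀'} ≠ θ` and write `ι (1; a₀, j) * v = ι W`. By `e` the column of `W`
sees `a₀`, hence `α`, so `ι (1; a₀, j) * (v * ι (h; α, β))` is nonzero: the row of
`v * ι (h; α, β)` is seen by `j`, i.e. it is `~ a₀'`. -/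
theorem mapsRowClass_of_mul_eq (hreg : IsRegularSandwich P) (hdiag : IsCSDiagonal P)
    {ι : ReesMatrix G n m P →ₙ* S} (hinj : Function.Injective ι)
    (hideal : IsIdeal S (Set.range ι)) {v : S} {g₀ g₀' : G} {a₀ a₀' : Fin n} {b₀ : Fin m}
    (e : v * ι (elem g₀ a₀ b₀) = ι (elem g₀' a₀' b₀)) : MapsRowClass ι v a₀ a₀' := by
  intro α hα h β
  obtain ⟨j, p, hp⟩ : ∃ j p, P j a₀' = some p := by
    obtain ⟨j, hj⟩ := hreg.1 a₀'
    exact ⟨j, Option.ne_none_iff_exists'.mp hj⟩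
  obtain ⟨W, hW⟩ := (hideal v (ι (elem 1 a₀ j)) ⟨_, rfl⟩).2
  obtain ⟨u, _, j₀, _, rfl, hu, hj₀⟩ :
      ∃ (u b : G) (j₀ : Fin m) (k : Fin n),
        W = elem u a₀ j₀ ∧ elem g₀ a₀ b₀ = (elem b k b₀ : ReesMatrix G n m P) ∧
          P j₀ k ≠ none := by
    refine exists_of_mul_eq_elem (g := p * g₀') (hinj ?_)
    rw [map_mul, hW, mul_assoc, e, ← map_mul, elem_mul_elem hp, one_mul]
  cases hu
  obtain ⟨q, hq⟩ := Option.ne_none_iff_exists'.mp (hdiag.ne_none_of_rowRel hj₀ (rowRel_symm hα))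
  obtain ⟨V, hV⟩ := (hideal v (ι (elem h α β)) ⟨_, rfl⟩).1
  obtain ⟨_, h', _, α', hj, rfl, hα'⟩ :
      ∃ (c h' : G) (i : Fin m) (α' : Fin n),
        elem 1 a₀ j = (elem c a₀ i : ReesMatrix G n m P) ∧ V = elem h' α' β ∧
          P i α' ≠ none := by
    refine exists_of_mul_eq_elem (g := u * q * h) (hinj ?_)
    rw [map_mul, hV, ← mul_assoc, ← hW, ← map_mul, elem_mul_elem hq]
  cases hj
  exact ⟨h', α', ⟨j, hα', by simp [hp]⟩, hV.symm⟩

theorem MapsRowClass.mono (hdiag : IsCSDiagonal P) {ι : ReesMatrix G n m P →ₙ* S} {v : S}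
    {a a' b b' : Fin n} (h : MapsRowClass ι v a a') (hab : rowRel P a b)
    (hab' : rowRel P a' b') : MapsRowClass ι v b b' := by
  intro α hα g β
  obtain ⟨g', α', hα', e⟩ := h α (hdiag.rowRel_trans hα (rowRel_symm hab)) g β
  exact ⟨g', α', hdiag.rowRel_trans hα' hab', e⟩

theorem MapsRowClass.exists_mul_mul_eq (hdiag : IsCSDiagonal P)
    {ι : ReesMatrix G n m P →ₙ* S} {v : S} {a a' : Fin n} (h : MapsRowClass ι v a a')
    {α : Fin n} (hα : rowRel P α a) {μ : Fin m} (hμ : P μ a' ≠ none)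
    (g : G) (i : Fin n) (h₀ : G) (β : Fin m) :
    ∃ c, ι (elem g i μ) * v * ι (elem h₀ α β) = ι (elem c i β) := by
  obtain ⟨h', α', hα', e⟩ := h α hα h₀ β
  obtain ⟨q, hq⟩ := Option.ne_none_iff_exists'.mp (hdiag.ne_none_of_rowRel hμ (rowRel_symm hα'))
  exact ⟨g * q * h', by rw [mul_assoc, e, ← map_mul, elem_mul_elem hq]⟩

/-- Sandwiching by a row `r` that sees `i₁` but not `i₂` sends the first element to any
prescribed element of `M` and the second to `θ`. -/
theorem Con.rel_theta_of_not_rowRel (hreg : IsRegularSandwich P) (ι : ReesMatrix G n m P →ₙ* S)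
    (c : Con S) {a b : G} {i₁ i₂ : Fin n} {j₁ j₂ : Fin m} (hrow : ¬ rowRel P i₁ i₂)
    (h : c (ι (elem a i₁ j₁)) (ι (elem b i₂ j₂))) :
    ∀ x ∈ Set.range ι, c x (ι theta) := by
  rintro _ ⟨_ | ⟨g, i, j⟩, rfl⟩
  · exact c.refl _
  obtain ⟨r, hr⟩ := hreg.1 i₁
  obtain ⟨p, hp⟩ := Option.ne_none_iff_exists'.mp hr
  have hr₂ : P r i₂ = none := by
    by_contra hne
    exact hrow ⟨r, hr, hne⟩
  obtain ⟨t, ht⟩ := hreg.2 j₁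
  obtain ⟨q, hq⟩ := Option.ne_none_iff_exists'.mp ht
  have := c.mul (c.mul (c.refl (ι (elem (g * (p * a * q)⁻¹) i r))) h) (c.refl (ι (elem 1 t j)))
  rwa [← map_mul, ← map_mul, ← map_mul, ← map_mul, elem_mul_elem hp, elem_mul_elem hq,
    elem_mul_elem_eq_theta hr₂, theta_mul, show g * (p * a * q)⁻¹ * p * a * q * 1 = g by group]
    at this

theorem malcev_crossed_eq (hreg : IsRegularSandwich P) (hdiag : IsCSDiagonal P)
    {ι : ReesMatrix G n m P →ₙ* S} {v₁ v₂ : S} {k₁ k₂ k₃ k₄ : Fin n}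
    (h₁₂ : MapsRowClass ι v₁ k₁ k₂) (h₃₄ : MapsRowClass ι v₁ k₃ k₄)
    (h₁₄ : MapsRowClass ι v₂ k₁ k₄) (h₃₂ : MapsRowClass ι v₂ k₃ k₂)
    {μ ν : Fin m} (hμ : P μ k₂ ≠ none) (hν : P ν k₄ ≠ none) (a₀ b₀ : G) (t : ℕ) :
    ∃ a b : G,
      malcev (ι (elem a₀ k₁ μ) : WithOne S) (ι (elem b₀ k₃ ν))
          (fun j => if Even j then (v₁ : WithOne S) else v₂) (2 * t) =
        ((ι (elem a k₁ μ) : WithOne S), (ι (elem b k₃ ν) : WithOne S)) := by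
  induction t with
  | zero => exact ⟨a₀, b₀, rfl⟩
  | succ t ih =>
    obtain ⟨a, b, hab⟩ := ih
    obtain ⟨c, hc⟩ := h₃₂.exists_mul_mul_eq hdiag (hreg.rowRel_refl k₃) hμ a k₁ b ν
    obtain ⟨d, hd⟩ := h₁₄.exists_mul_mul_eq hdiag (hreg.rowRel_refl k₁) hν b k₃ a μ
    obtain ⟨a', ha'⟩ := h₃₄.exists_mul_mul_eq hdiag (hreg.rowRel_refl k₃) hν c k₁ d μ
    obtain ⟨b', hb'⟩ := h₁₂.exists_mul_mul_eq hdiag (hreg.rowRel_refl k₁) hμ d k₃ c ν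
    refine ⟨a', b', ?_⟩
    rw [show 2 * (t + 1) = 2 * t + 1 + 1 by ring, malcev, malcev, hab]
    simp only [Nat.even_add_one, even_two_mul, not_true, not_false_eq_true, if_true, if_false]
    norm_cast
    rw [hc, hd, ha', hb']

end ReesIdeal

theorem etaStar_theta_of_crossed_action_general (S : Type*) [Semigroup S] [Finite S]
    (G : Type*) [Group G] (n m : ℕ) (P : Fin m → Fin n → Option G)
    (hreg : IsRegularSandwich P) (hdiag : IsCSDiagonal P)
    (ι : ReesMatrix G n m P →ₙ* S) (hinj : Function.Injective ι)
    (hideal : IsIdeal S (Set.range ι))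
    (v₁ v₂ : S)
    (k₁ k₂ k₃ k₄ : Fin n) (hk : ¬ rowRel P k₁ k₃)
    (g₁ g₁' g₂ g₂' g₃ g₃' g₄ g₄' : G)
    (α₁ α₁' α₂ α₂' α₃ α₃' α₄ α₄' : Fin n) (β₁ β₂ β₃ β₄ : Fin m)
    (hα₁ : rowRel P α₁ k₁) (hα₁' : rowRel P α₁' k₂)
    (hα₂ : rowRel P α₂ k₃) (hα₂' : rowRel P α₂' k₄)
    (hα₃ : rowRel P α₃ k₁) (hα₃' : rowRel P α₃' k₄)
    (hα₄ : rowRel P α₄ k₃) (hα₄' : rowRel P α₄' k₂)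
    (e₁ : v₁ * ι (ReesMatrix.elem g₁ α₁ β₁) = ι (ReesMatrix.elem g₁' α₁' β₁))
    (e₂ : v₁ * ι (ReesMatrix.elem g₂ α₂ β₂) = ι (ReesMatrix.elem g₂' α₂' β₂))
    (e₃ : v₂ * ι (ReesMatrix.elem g₃ α₃ β₃) = ι (ReesMatrix.elem g₃' α₃' β₃))
    (e₄ : v₂ * ι (ReesMatrix.elem g₄ α₄ β₄) = ι (ReesMatrix.elem g₄' α₄' β₄)) :
    ∀ x ∈ Set.range ι, etaStar S x (ι ReesMatrix.theta) := by
  have h₁₂ := (mapsRowClass_of_mul_eq hreg hdiag hinj hideal e₁).mono hdiag hα₁ hα₁'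
  have h₃₄ := (mapsRowClass_of_mul_eq hreg hdiag hinj hideal e₂).mono hdiag hα₂ hα₂'
  have h₁₄ := (mapsRowClass_of_mul_eq hreg hdiag hinj hideal e₃).mono hdiag hα₃ hα₃'
  have h₃₂ := (mapsRowClass_of_mul_eq hreg hdiag hinj hideal e₄).mono hdiag hα₄ hα₄'
  obtain ⟨μ, hμ⟩ := hreg.1 k₂
  obtain ⟨ν, hν⟩ := hreg.1 k₄
  obtain ⟨t, x, y, hxy, hη⟩ := exists_malcev_eq_coe_eta (ι (elem 1 k₁ μ)) (ι (elem 1 k₃ ν))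
    (fun j => if Even j then (v₁ : WithOne S) else v₂) le_rfl
  obtain ⟨a, b, hab⟩ := malcev_crossed_eq hreg hdiag h₁₂ h₃₄ h₁₄ h₃₂ hμ hν 1 1 t
  obtain ⟨rfl, rfl⟩ : ι (elem a k₁ μ) = x ∧ ι (elem b k₃ ν) = y := by
    simpa only [hab, Prod.mk.injEq, WithOne.coe_inj] using hxy
  exact (etaStar S).rel_theta_of_not_rowRel hreg ι hk (ConGen.Rel.of _ _ hη)

/-- if `S = M ∪ T` with `M` a CS-diagonal regular Rees matrix ideal
and elements `v₁, v₂ ∈ T` act on the `~`-classes of rows in the crossed pattern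
`[…,K₁,K₂,…,K₃,K₄,…] ⊑ Γ(v₁)`, `[…,K₁,K₄,…,K₃,K₂,…] ⊑ Γ(v₂)` with `K₁ ≠ K₃`,
then every element of `M` is `η*`-related in `S` to `θ`. -/
theorem etaStar_theta_of_crossed_action (S : Type*) [Semigroup S] [Finite S]
    (G : Type*) [Group G] [Finite G] (n m : ℕ) (P : Fin m → Fin n → Option G)
    (hreg : IsRegularSandwich P) (hdiag : IsCSDiagonal P)
    (ι : ReesMatrix G n m P →ₙ* S) (hinj : Function.Injective ι)
    (hideal : IsIdeal S (Set.range ι))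
    (T : Subsemigroup S) (hcover : ∀ s : S, s ∈ Set.range ι ∨ s ∈ T)
    (v₁ v₂ : S) (hv₁ : v₁ ∈ T) (hv₂ : v₂ ∈ T)
    (k₁ k₂ k₃ k₄ : Fin n) (hk : ¬ rowRel P k₁ k₃)
    (g₁ g₁' g₂ g₂' g₃ g₃' g₄ g₄' : G)
    (α₁ α₁' α₂ α₂' α₃ α₃' α₄ α₄' : Fin n) (β₁ β₂ β₃ β₄ : Fin m)
    (hα₁ : rowRel P α₁ k₁) (hα₁' : rowRel P α₁' k₂)
    (hα₂ : rowRel P α₂ k₃) (hα₂' : rowRel P α₂' k₄)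
    (hα₃ : rowRel P α₃ k₁) (hα₃' : rowRel P α₃' k₄)
    (hα₄ : rowRel P α₄ k₃) (hα₄' : rowRel P α₄' k₂)
    (e₁ : v₁ * ι (ReesMatrix.elem g₁ α₁ β₁) = ι (ReesMatrix.elem g₁' α₁' β₁))
    (e₂ : v₁ * ι (ReesMatrix.elem g₂ α₂ β₂) = ι (ReesMatrix.elem g₂' α₂' β₂))
    (e₃ : v₂ * ι (ReesMatrix.elem g₃ α₃ β₃) = ι (ReesMatrix.elem g₃' α₃' β₃))
    (e₄ : v₂ * ι (ReesMatrix.elem g₄ α₄ β₄) = ι (ReesMatrix.elem g₄' α₄' β₄)) :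
    ∀ x ∈ Set.range ι, etaStar S x (ι ReesMatrix.theta) :=
  etaStar_theta_of_crossed_action_general S G n m P hreg hdiag ι hinj hideal v₁ v₂ k₁ k₂ k₃ k₄ hk g₁
    g₁' g₂ g₂' g₃ g₃' g₄ g₄' α₁ α₁' α₂ α₂' α₃ α₃' α₄ α₄' β₁ β₂ β₃ β₄ hα₁ hα₁' hα₂ hα₂' hα₃ hα₃' hα₄
    hα₄' e₁ e₂ e₃ e₄
end
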